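/- Let f be a 3-cube in a whiskered groupoid C arising as a*b*c for a: x → y, b: u → v, c: z → w (edges given by whiskered morphisms, e.g. the direction-1 edges are a.uz, a.uw, a.vz, a.vw, direction-2 edges x.b.z, x.b.w, y.b.z, y.b.w, direction-3 edges xu.c, xv.c, yu.c, yv.c). Then the six faces of f have δ-values: δ∂₁⁻f = x.[b,c], δ∂₁⁺f = y.[b,c], δ∂₂⁻f = [a, u.c], δ∂₂⁺f = [a, v.c], δ∂₃⁻f = [a,b].z, δ∂₃⁺f = [a,b].w. -/
import Mathlib


open CategoryTheory

universe v u

/-- A whiskering on a category `C`: a monoid structure on the objects together with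
left (`lw`) and right (`rw'`) actions of the objects on the morphisms, satisfying
the whiskering axioms. -/
structure WhiskerStruct (C : Type u) [Category.{v} C] [Monoid C] where
  lw : ∀ (x : C) {u v : C}, (u ⟶ v) → ((x * u) ⟶ (x * v))
  rw' : ∀ (x : C) {u v : C}, (u ⟶ v) → ((u * x) ⟶ (v * x))
  lw_one : ∀ {u v : C} (a : u ⟶ v),
    lw 1 a = eqToHom (one_mul u) ≫ a ≫ eqToHom (one_mul v).symm
  lw_mul : ∀ (x y : C) {u v : C} (a : u ⟶ v),
    lw (x * y) a = eqToHom (mul_assoc x y u) ≫ lw x (lw y a) ≫ eqToHom (mul_assoc x y v).symm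
  lw_comp : ∀ (x : C) {u v w : C} (a : u ⟶ v) (b : v ⟶ w),
    lw x (a ≫ b) = lw x a ≫ lw x b
  lw_id : ∀ (x u : C), lw x (𝟙 u) = 𝟙 (x * u)
  rw_one : ∀ {u v : C} (a : u ⟶ v),
    rw' 1 a = eqToHom (mul_one u) ≫ a ≫ eqToHom (mul_one v).symm
  rw_mul : ∀ (x y : C) {u v : C} (a : u ⟶ v),
    rw' (x * y) a = eqToHom (mul_assoc u x y).symm ≫ rw' y (rw' x a) ≫ eqToHom (mul_assoc v x y)
  rw_comp : ∀ (x : C) {u v w : C} (a : u ⟶ v) (b : v ⟶ w),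
    rw' x (a ≫ b) = rw' x a ≫ rw' x b
  rw_id : ∀ (x u : C), rw' x (𝟙 u) = 𝟙 (u * x)
  lw_rw : ∀ (x y : C) {u v : C} (a : u ⟶ v),
    lw x (rw' y a) = eqToHom (mul_assoc x u y).symm ≫ rw' y (lw x a) ≫ eqToHom (mul_assoc x v y)

/-- The commutator `[a,b] = (a.v)⁻¹ ≫ (x.b)⁻¹ ≫ (a.u) ≫ (y.b)` of `a : x ⟶ y` and
`b : u ⟶ v` in a whiskered groupoid (composition written left to right, i.e. `≫`). -/
def WhiskerStruct.comm {C : Type u} [Groupoid.{v} C] [Monoid C] (W : WhiskerStruct C)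
    {x y u v : C} (a : x ⟶ y) (b : u ⟶ v) : (y * v) ⟶ (y * v) :=
  Groupoid.inv (W.rw' v a) ≫ Groupoid.inv (W.lw x b) ≫ W.rw' u a ≫ W.lw y b

/-- `δ` of a (not necessarily commutative) square in a groupoid, with top edge `t`,
left edge `l`, right edge `r`, bottom edge `b`. -/
def sqDelta {C : Type u} [Groupoid.{v} C] {x p q y : C}
    (t : x ⟶ p) (l : x ⟶ q) (r : p ⟶ y) (b : q ⟶ y) : y ⟶ y :=
  Groupoid.inv r ≫ Groupoid.inv t ≫ l ≫ b

section Aux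
variable {C : Type u} [Groupoid.{v} C] [Monoid C] (W : WhiskerStruct C)

lemma WhiskerStruct.lw_inv (x : C) {u v : C} (f : u ⟶ v) :
    W.lw x (inv f) = inv (W.lw x f) := by
  apply IsIso.eq_inv_of_hom_inv_id
  rw [← W.lw_comp, IsIso.hom_inv_id, W.lw_id]

lemma WhiskerStruct.rw_inv (x : C) {u v : C} (f : u ⟶ v) :
    W.rw' x (inv f) = inv (W.rw' x f) := by
  apply IsIso.eq_inv_of_hom_inv_id
  rw [← W.rw_comp, IsIso.hom_inv_id, W.rw_id]

lemma WhiskerStruct.rw_lw (x z : C) {u v : C} (f : u ⟶ v) :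
    W.rw' z (W.lw x f) = eqToHom (mul_assoc x u z) ≫ W.lw x (W.rw' z f) ≫
      eqToHom (mul_assoc x v z).symm := by
  rw [W.lw_rw]; simp

lemma WhiskerStruct.rw_rw (u z : C) {x y : C} (a : x ⟶ y) :
    W.rw' z (W.rw' u a) = eqToHom (mul_assoc x u z) ≫ W.rw' (u * z) a ≫
      eqToHom (mul_assoc y u z).symm := by
  rw [W.rw_mul]; simp

lemma WhiskerStruct.lw_lw (x u : C) {z w : C} (c : z ⟶ w) :
    W.lw (x * u) c = eqToHom (mul_assoc x u z) ≫ W.lw x (W.lw u c) ≫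
      eqToHom (mul_assoc x u w).symm := W.lw_mul x u c

end Aux

/-- The six faces of the `3`-cube `a*b*c` in a whiskered groupoid (edges the
whiskered morphisms `a.uz, …, x.b.z, …, xu.c, …`) have `δ`-values the commutators
`x.[b,c]`, `y.[b,c]`, `[a, u.c]`, `[a, v.c]`, `[a,b].z`, `[a,b].w` (transported where
necessary along the canonical associativity `eqToHom`s). -/
theorem cube_faces_delta {C : Type u} [Groupoid.{v} C] [Monoid C]
    (W : WhiskerStruct C) {x y u v z w : C} (a : x ⟶ y) (b : u ⟶ v) (c : z ⟶ w) :
    sqDelta (W.lw (x * u) c) (W.rw' z (W.lw x b)) (W.rw' w (W.lw x b)) (W.lw (x * v) c) =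
      eqToHom (mul_assoc x v w) ≫ W.lw x (W.comm b c) ≫ eqToHom (mul_assoc x v w).symm ∧
    sqDelta (W.lw (y * u) c) (W.rw' z (W.lw y b)) (W.rw' w (W.lw y b)) (W.lw (y * v) c) =
      eqToHom (mul_assoc y v w) ≫ W.lw y (W.comm b c) ≫ eqToHom (mul_assoc y v w).symm ∧
    sqDelta (W.lw (x * u) c) (W.rw' z (W.rw' u a)) (W.rw' w (W.rw' u a)) (W.lw (y * u) c) =
      eqToHom (mul_assoc y u w) ≫ W.comm a (W.lw u c) ≫ eqToHom (mul_assoc y u w).symm ∧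
    sqDelta (W.lw (x * v) c) (W.rw' z (W.rw' v a)) (W.rw' w (W.rw' v a)) (W.lw (y * v) c) =
      eqToHom (mul_assoc y v w) ≫ W.comm a (W.lw v c) ≫ eqToHom (mul_assoc y v w).symm ∧
    sqDelta (W.rw' z (W.lw x b)) (W.rw' z (W.rw' u a)) (W.rw' z (W.rw' v a))
        (W.rw' z (W.lw y b)) =
      W.rw' z (W.comm a b) ∧
    sqDelta (W.rw' w (W.lw x b)) (W.rw' w (W.rw' u a)) (W.rw' w (W.rw' v a))
        (W.rw' w (W.lw y b)) =
      W.rw' w (W.comm a b) := by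
  refine ⟨?_, ?_, ?_, ?_, ?_, ?_⟩ <;>
    simp [sqDelta, WhiskerStruct.comm, W.lw_lw, W.rw_lw, W.rw_rw, W.lw_comp, W.rw_comp,
      Groupoid.inv_eq_inv, W.lw_inv, W.rw_inv]
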